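/- Let h ∈ C¹(M) and x ∈ [-M,M] be such that the Newton orbit τ(h,x) is well-defined and bounded in [-M,M], and suppose that for every j ∈ ℕ there exist n(j) ∈ ℕ divisible by j and pairwise disjoint nondegenerate closed intervals J₁ʲ,…,J_{n(j)}ʲ ⊆ [-M,M], each of length < 1/j, such that N(h,·) maps J_kʲ into J_{k+1}ʲ for k < n(j), maps J_{n(j)}ʲ into J₁ʲ, and some iterate τ(h,x)(k) lies in J₁ʲ ∪ ⋯ ∪ J_{n(j)}ʲ. Then the ω-limit set ω(h,x) together with the restriction of N(h,·) is topologically conjugate to an ∞-adic odometer. -/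
import Mathlib

open Set Filter Topology

/-- Newton map: N(h,x) = x - h(x)/h'(x). -/
noncomputable def newton (h h' : ℝ → ℝ) (x : ℝ) : ℝ := x - h x / h' x

/-- Newton sequence: x₀ = x, x_{n+1} = N(h, x_n). -/
noncomputable def newtonSeq (h h' : ℝ → ℝ) (x : ℝ) : ℕ → ℝ
  | 0 => x
  | n + 1 => newton h h' (newtonSeq h h' x n)

/-- Successor mod m on Fin m. -/
def finSucc {m : ℕ} (x : Fin m) : Fin m := ⟨(x.val + 1) % m, Nat.mod_lt _ x.pos⟩

/-- Auxiliary recursion defining the add-one-with-carry map on Δ_α = Π i, Fin (α i). -/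
def phiAux (α : ℕ → ℕ) (x : ∀ i, Fin (α i)) : (i : ℕ) → Fin (α i)
  | 0 => finSucc (x 0)
  | i + 1 => if (x i).val ≤ (phiAux α x i).val then x (i + 1) else finSucc (x (i + 1))

/-- The adding machine (odometer) map φ_α on Δ_α = Π i, Fin (α i). -/
def phi (α : ℕ → ℕ) (x : ∀ i, Fin (α i)) : ∀ i, Fin (α i) := fun i => phiAux α x i

/-- The ω-limit set of the Newton orbit. -/
noncomputable def omegaSet (h h' : ℝ → ℝ) (x : ℝ) : Set ℝ :=
  ⋂ m : ℕ, closure {y : ℝ | ∃ n ≥ m, newtonSeq h h' x n = y}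


/-- Partial products of α. -/
def mval (α : ℕ → ℕ) : ℕ → ℕ
  | 0 => 1
  | k + 1 => mval α k * α k

/-- Value of the first k digits. -/
def odval (α : ℕ → ℕ) (d : ∀ i, Fin (α i)) : ℕ → ℕ
  | 0 => 0
  | k + 1 => odval α d k + (d k).val * mval α k

variable {α : ℕ → ℕ}

lemma mval_pos (hα : ∀ i, 2 ≤ α i) (k : ℕ) : 0 < mval α k := by
  induction k with
  | zero => simp [mval]
  | succ k ih => exact Nat.mul_pos ih (lt_of_lt_of_le (by norm_num) (hα k))

lemma odval_lt (hα : ∀ i, 2 ≤ α i) (d : ∀ i, Fin (α i)) (k : ℕ) :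
    odval α d k < mval α k := by
  induction k with
  | zero => simp [odval, mval]
  | succ k ih =>
    have h1 : (d k).val + 1 ≤ α k := (d k).isLt
    have h2 : odval α d k + 1 ≤ mval α k := ih
    show odval α d k + (d k).val * mval α k < mval α k * α k
    calc odval α d k + (d k).val * mval α k + 1
        ≤ mval α k + (d k).val * mval α k := by omega
      _ = ((d k).val + 1) * mval α k := by ring
      _ ≤ α k * mval α k := Nat.mul_le_mul_right _ h1
      _ = mval α k * α k := Nat.mul_comm _ _

lemma phi_zero (d : ∀ i, Fin (α i)) : phi α d 0 = finSucc (d 0) := rfl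

lemma phi_succ (d : ∀ i, Fin (α i)) (i : ℕ) :
    phi α d (i+1) = if (d i).val ≤ (phi α d i).val then d (i+1) else finSucc (d (i+1)) := rfl

lemma phi_val (hα : ∀ i, 2 ≤ α i) (d : ∀ i, Fin (α i)) (i : ℕ) :
    (phi α d i).val = if odval α d i + 1 = mval α i then ((d i).val + 1) % α i
      else (d i).val := by
  induction i with
  | zero => simp [phi_zero, finSucc, odval, mval]
  | succ i ih =>
    have hαi : 0 < α i := lt_of_lt_of_le (by norm_num) (hα i)
    have hd : (d i).val < α i := (d i).isLt
    have hov : odval α d i < mval α i := odval_lt hα d i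
    rw [phi_succ]
    by_cases h1 : odval α d i + 1 = mval α i
    · rw [ih, if_pos h1]
      by_cases h2 : (d i).val + 1 = α i
      · have hmod : ((d i).val + 1) % α i = 0 := by rw [h2]; exact Nat.mod_self _
        have hpos : 0 < (d i).val := by
          have := hα i; omega
        rw [hmod, if_neg (by omega)]
        have hcar : odval α d (i+1) + 1 = mval α (i+1) := by
          show odval α d i + (d i).val * mval α i + 1 = mval α i * α i
          have : ((d i).val + 1) * mval α i = α i * mval α i := by rw [h2]
          calc odval α d i + (d i).val * mval α i + 1
              = mval α i + (d i).val * mval α i := by omega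
            _ = ((d i).val + 1) * mval α i := by ring
            _ = α i * mval α i := this
            _ = mval α i * α i := Nat.mul_comm _ _
        rw [if_pos hcar]; rfl
      · have h2' : (d i).val + 1 < α i := by omega
        have hmod : ((d i).val + 1) % α i = (d i).val + 1 := Nat.mod_eq_of_lt h2'
        rw [hmod, if_pos (by omega)]
        have hnc : odval α d (i+1) + 1 ≠ mval α (i+1) := by
          show odval α d i + (d i).val * mval α i + 1 ≠ mval α i * α i
          have hlt : odval α d i + (d i).val * mval α i + 1 < mval α i * α i := by
            calc odval α d i + (d i).val * mval α i + 1
                = mval α i + (d i).val * mval α i := by omega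
              _ = ((d i).val + 1) * mval α i := by ring
              _ < α i * mval α i := by
                  exact Nat.mul_lt_mul_of_lt_of_le h2' (le_refl _) (mval_pos hα i)
              _ = mval α i * α i := Nat.mul_comm _ _
          omega
        rw [if_neg hnc]
    · rw [ih, if_neg h1, if_pos (le_refl _)]
      have hnc : odval α d (i+1) + 1 ≠ mval α (i+1) := by
        show odval α d i + (d i).val * mval α i + 1 ≠ mval α i * α i
        have hlt : odval α d i + (d i).val * mval α i + 1 < mval α i * α i := by
          have h1' : odval α d i + 1 < mval α i := by omega
          calc odval α d i + (d i).val * mval α i + 1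
              < mval α i + (d i).val * mval α i := by omega
            _ = ((d i).val + 1) * mval α i := by ring
            _ ≤ α i * mval α i := Nat.mul_le_mul_right _ hd
            _ = mval α i * α i := Nat.mul_comm _ _
        omega
      rw [if_neg hnc]

lemma odval_phi (hα : ∀ i, 2 ≤ α i) (d : ∀ i, Fin (α i)) (k : ℕ) :
    odval α (phi α d) k = (odval α d k + 1) % mval α k := by
  induction k with
  | zero => simp [odval, mval]
  | succ k ih =>
    have hαk : 0 < α k := lt_of_lt_of_le (by norm_num) (hα k)
    have hov : odval α d k < mval α k := odval_lt hα d k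
    have hm : 0 < mval α k := mval_pos hα k
    show odval α (phi α d) k + (phi α d k).val * mval α k
        = (odval α d k + (d k).val * mval α k + 1) % (mval α k * α k)
    rw [ih, phi_val hα]
    by_cases h1 : odval α d k + 1 = mval α k
    · rw [if_pos h1]
      have hz : (odval α d k + 1) % mval α k = 0 := by rw [h1]; exact Nat.mod_self _
      rw [hz]
      by_cases h2 : (d k).val + 1 = α k
      · have : odval α d k + (d k).val * mval α k + 1 = mval α k * α k := by
          calc odval α d k + (d k).val * mval α k + 1
              = mval α k + (d k).val * mval α k := by omega
            _ = ((d k).val + 1) * mval α k := by ring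
            _ = α k * mval α k := by rw [h2]
            _ = mval α k * α k := Nat.mul_comm _ _
        rw [this, Nat.mod_self, h2, Nat.mod_self, Nat.zero_mul, Nat.zero_add]
      · have h2' : (d k).val + 1 < α k := by have := (d k).isLt; omega
        rw [Nat.mod_eq_of_lt h2']
        have heq : odval α d k + (d k).val * mval α k + 1 = ((d k).val + 1) * mval α k := by
          calc odval α d k + (d k).val * mval α k + 1
              = mval α k + (d k).val * mval α k := by omega
            _ = ((d k).val + 1) * mval α k := by ring
        rw [heq, Nat.mod_eq_of_lt, Nat.zero_add]
        calc ((d k).val + 1) * mval α k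
            < α k * mval α k := Nat.mul_lt_mul_of_lt_of_le h2' (le_refl _) hm
          _ = mval α k * α k := Nat.mul_comm _ _
    · rw [if_neg h1]
      have h1' : odval α d k + 1 < mval α k := by omega
      rw [Nat.mod_eq_of_lt h1']
      have hlt : odval α d k + (d k).val * mval α k + 1 < mval α k * α k := by
        calc odval α d k + (d k).val * mval α k + 1
            < mval α k + (d k).val * mval α k := by omega
          _ = ((d k).val + 1) * mval α k := by ring
          _ ≤ α k * mval α k := Nat.mul_le_mul_right _ (d k).isLt
          _ = mval α k * α k := Nat.mul_comm _ _
      rw [Nat.mod_eq_of_lt hlt]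
      omega

lemma odval_eq_digits (hα : ∀ i, 2 ≤ α i) (d₁ d₂ : ∀ i, Fin (α i))
    (hv : ∀ k, odval α d₁ (k+1) = odval α d₂ (k+1)) : d₁ = d₂ := by
  funext i
  have h0 : ∀ k, odval α d₁ k = odval α d₂ k := by
    intro k; cases k with
    | zero => rfl
    | succ k => exact hv k
  have h1 := h0 (i+1)
  have h2 := h0 i
  have : (d₁ i).val * mval α i = (d₂ i).val * mval α i := by
    have e1 : odval α d₁ (i+1) = odval α d₁ i + (d₁ i).val * mval α i := rfl
    have e2 : odval α d₂ (i+1) = odval α d₂ i + (d₂ i).val * mval α i := rfl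
    omega
  exact Fin.ext (Nat.eq_of_mul_eq_mul_right (mval_pos hα i) this)

/-- Build a digit sequence from a compatible sequence of residues `c k < mval α (k+1)`. -/
def mkDigits (α : ℕ → ℕ) (hα : ∀ i, 2 ≤ α i) (c : ℕ → ℕ)
    (hc1 : ∀ k, c k < mval α (k+1)) : ∀ i, Fin (α i)
  | 0 => ⟨c 0, by have := hc1 0; simpa [mval] using this⟩
  | i + 1 => ⟨c (i+1) / mval α (i+1), by
      have h := hc1 (i+1)
      exact Nat.div_lt_of_lt_mul (by simpa [mval] using h)⟩

lemma mkDigits_odval (hα : ∀ i, 2 ≤ α i) (c : ℕ → ℕ)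
    (hc1 : ∀ k, c k < mval α (k+1)) (hc2 : ∀ k, c (k+1) % mval α (k+1) = c k) (k : ℕ) :
    odval α (mkDigits α hα c hc1) (k+1) = c k := by
  induction k with
  | zero =>
    show odval α _ 0 + (mkDigits α hα c hc1 0).val * mval α 0 = c 0
    simp [odval, mval, mkDigits]
  | succ k ih =>
    show odval α _ (k+1) + (mkDigits α hα c hc1 (k+1)).val * mval α (k+1) = c (k+1)
    rw [ih]
    show c k + (c (k+1) / mval α (k+1)) * mval α (k+1) = c (k+1)
    rw [← hc2 k, Nat.mul_comm]
    exact Nat.mod_add_div _ _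

variable {M : ℝ} {h h' : ℝ → ℝ} {x y : ℝ}

lemma mem_omegaSet_iff :
    y ∈ omegaSet h h' x ↔ ∀ m : ℕ, ∀ ε > (0:ℝ), ∃ n, m ≤ n ∧ |newtonSeq h h' x n - y| < ε := by
  constructor
  · intro hy m ε hε
    have h1 : y ∈ closure {z : ℝ | ∃ n ≥ m, newtonSeq h h' x n = z} := by
      exact Set.mem_iInter.mp hy m
    rcases Metric.mem_closure_iff.mp h1 ε hε with ⟨z, ⟨n, hn, hz⟩, hd⟩
    exact ⟨n, hn, by rw [hz]; rw [Real.dist_eq] at hd; rw [abs_sub_comm]; exact hd⟩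
  · intro H
    refine Set.mem_iInter.mpr fun m => Metric.mem_closure_iff.mpr fun ε hε => ?_
    rcases H m ε hε with ⟨n, hn, hd⟩
    exact ⟨newtonSeq h h' x n, ⟨n, hn, rfl⟩, by rw [Real.dist_eq, abs_sub_comm]; exact hd⟩

lemma omegaSet_of_subseq {φ : ℕ → ℕ} (hφ : StrictMono φ)
    (ht : Tendsto (fun i => newtonSeq h h' x (φ i)) atTop (𝓝 y)) :
    y ∈ omegaSet h h' x := by
  refine Set.mem_iInter.mpr fun m => ?_
  refine mem_closure_of_tendsto ht ?_
  filter_upwards [eventually_ge_atTop m] with i hi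
  exact ⟨φ i, le_trans hi (hφ.le_apply), rfl⟩

lemma omegaSet_subseq (hy : y ∈ omegaSet h h' x) :
    ∃ φ : ℕ → ℕ, StrictMono φ ∧ Tendsto (fun i => newtonSeq h h' x (φ i)) atTop (𝓝 y) := by
  have hex : ∀ m i : ℕ, ∃ n, m ≤ n ∧ |newtonSeq h h' x n - y| < 1/(i+1) := by
    intro m i
    exact mem_omegaSet_iff.mp hy m (1/(i+1)) (by positivity)
  choose F hF1 hF2 using hex
  let φ : ℕ → ℕ := fun i => Nat.rec (F 0 0) (fun i prev => F (prev+1) (i+1)) i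
  have hφs : ∀ i, φ (i+1) = F (φ i + 1) (i+1) := fun i => rfl
  have hmono : StrictMono φ := by
    apply strictMono_nat_of_lt_succ
    intro i
    have := hF1 (φ i + 1) (i+1)
    rw [hφs]; omega
  have hbd : ∀ i, |newtonSeq h h' x (φ i) - y| < 1/(i+1) := by
    intro i
    cases i with
    | zero => exact hF2 0 0
    | succ i => rw [hφs]; exact hF2 _ _
  refine ⟨φ, hmono, ?_⟩
  rw [tendsto_iff_dist_tendsto_zero]
  have hle : ∀ i : ℕ, dist (newtonSeq h h' x (φ i)) y ≤ 1/(i+1) := fun i => by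
    rw [Real.dist_eq]; exact (hbd i).le
  exact squeeze_zero (fun i => dist_nonneg) hle tendsto_one_div_add_atTop_nhds_zero_nat

lemma omegaSet_isClosed : IsClosed (omegaSet h h' x) :=
  isClosed_iInter fun _ => isClosed_closure

lemma omegaSet_subset_Icc (hwd : ∀ n : ℕ, newtonSeq h h' x n ∈ Icc (-M) M) :
    omegaSet h h' x ⊆ Icc (-M) M := by
  intro y hy
  have h1 : y ∈ closure {z : ℝ | ∃ n ≥ 0, newtonSeq h h' x n = z} := Set.mem_iInter.mp hy 0
  have h2 : {z : ℝ | ∃ n ≥ 0, newtonSeq h h' x n = z} ⊆ Icc (-M) M := by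
    rintro z ⟨n, -, rfl⟩; exact hwd n
  exact closure_minimal h2 isClosed_Icc h1

lemma omegaSet_isCompact (hwd : ∀ n : ℕ, newtonSeq h h' x n ∈ Icc (-M) M) :
    IsCompact (omegaSet h h' x) :=
  isCompact_Icc.of_isClosed_subset omegaSet_isClosed (omegaSet_subset_Icc hwd)

lemma newton_continuousWithinAt
    (hder : ∀ t ∈ Icc (-M) M, HasDerivWithinAt h (h' t) (Icc (-M) M) t)
    (hcont : ContinuousOn h' (Icc (-M) M)) (hy : y ∈ Icc (-M) M) (hy' : h' y ≠ 0) :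
    ContinuousWithinAt (newton h h') (Icc (-M) M) y := by
  have hh : ContinuousWithinAt h (Icc (-M) M) y := (hder y hy).continuousWithinAt
  have hh' : ContinuousWithinAt h' (Icc (-M) M) y := hcont y hy
  exact continuousWithinAt_id.sub (hh.div hh' hy')

lemma newton_mem_omegaSet
    (hder : ∀ t ∈ Icc (-M) M, HasDerivWithinAt h (h' t) (Icc (-M) M) t)
    (hcont : ContinuousOn h' (Icc (-M) M))
    (hwd : ∀ n : ℕ, newtonSeq h h' x n ∈ Icc (-M) M)
    (hy : y ∈ omegaSet h h' x) (hy' : h' y ≠ 0) :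
    newton h h' y ∈ omegaSet h h' x := by
  have hyI : y ∈ Icc (-M) M := omegaSet_subset_Icc hwd hy
  obtain ⟨φ, hφ, ht⟩ := omegaSet_subseq hy
  have ht' : Tendsto (fun i => newtonSeq h h' x (φ i)) atTop (𝓝[Icc (-M) M] y) := by
    rw [tendsto_nhdsWithin_iff]
    exact ⟨ht, Eventually.of_forall fun i => hwd (φ i)⟩
  have hN : Tendsto (fun i => newton h h' (newtonSeq h h' x (φ i))) atTop
      (𝓝 (newton h h' y)) :=
    (newton_continuousWithinAt hder hcont hyI hy').tendsto.comp ht'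
  have heq : (fun i => newton h h' (newtonSeq h h' x (φ i)))
      = fun i => newtonSeq h h' x (φ i + 1) := by
    funext i; rfl
  rw [heq] at hN
  exact omegaSet_of_subseq (fun a b hab => by simpa using hφ hab) hN

structure CycleData (M : ℝ) (h h' : ℝ → ℝ) (x : ℝ) (J : ℕ) : Type where
  n : ℕ
  npos : 0 < n
  jdvd : J ∣ n
  a : ℕ → ℝ
  b : ℕ → ℝ
  hab : ∀ k < n, a k < b k
  hsub : ∀ k < n, Icc (a k) (b k) ⊆ Icc (-M) M
  hlen : ∀ k < n, b k - a k < 1 / J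
  hdisj : ∀ k < n, ∀ l < n, k ≠ l → Disjoint (Icc (a k) (b k)) (Icc (a l) (b l))
  hmap : ∀ k < n, ∀ y ∈ Icc (a k) (b k),
    h' y ≠ 0 ∧ newton h h' y ∈ Icc (a ((k + 1) % n)) (b ((k + 1) % n))
  horb : ∃ m, ∃ k < n, newtonSeq h h' x m ∈ Icc (a k) (b k)

namespace CycleData

variable {M : ℝ} {h h' : ℝ → ℝ} {x y z : ℝ} {J : ℕ} (c : CycleData M h h' x J)

lemma cycle_tail : ∃ m₀ k₀, k₀ < c.n ∧ ∀ t : ℕ,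
    newtonSeq h h' x (m₀ + t) ∈ Icc (c.a ((k₀ + t) % c.n)) (c.b ((k₀ + t) % c.n)) := by
  obtain ⟨m, k, hk, hmem⟩ := c.horb
  refine ⟨m, k, hk, ?_⟩
  intro t
  induction t with
  | zero => simpa [Nat.mod_eq_of_lt hk] using hmem
  | succ t ih =>
    have hK : (k + t) % c.n < c.n := Nat.mod_lt _ c.npos
    have h2 := (c.hmap _ hK _ ih).2
    have h3 : ((k + t) % c.n + 1) % c.n = (k + (t+1)) % c.n := by
      rw [Nat.mod_add_mod]; ring_nf
    have h4 : m + (t + 1) = (m + t) + 1 := by ring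
    rw [h4]
    show newton h h' (newtonSeq h h' x (m + t)) ∈ _
    rw [← h3]
    exact h2

/-- Union of the cycle intervals. -/
def cycU : Set ℝ := ⋃ k ∈ Finset.range c.n, Icc (c.a k) (c.b k)

lemma mem_cycU_iff : y ∈ c.cycU ↔ ∃ k, k < c.n ∧ y ∈ Icc (c.a k) (c.b k) := by
  simp only [cycU, Finset.mem_coe, Set.mem_iUnion, Finset.mem_range, Set.mem_Icc]
  tauto

lemma cycU_isClosed : IsClosed c.cycU :=
  Set.Finite.isClosed_biUnion (Finset.finite_toSet _) (fun k _ => isClosed_Icc)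

lemma omegaSet_subset_cycU : omegaSet h h' x ⊆ c.cycU := by
  obtain ⟨m₀, k₀, hk₀, htail⟩ := c.cycle_tail
  intro y hy
  have h1 : y ∈ closure {z : ℝ | ∃ n ≥ m₀, newtonSeq h h' x n = z} := Set.mem_iInter.mp hy m₀
  have h2 : {z : ℝ | ∃ n ≥ m₀, newtonSeq h h' x n = z} ⊆ c.cycU := by
    rintro z ⟨n, hn, rfl⟩
    obtain ⟨t, rfl⟩ := Nat.exists_eq_add_of_le hn
    exact c.mem_cycU_iff.mpr ⟨_, Nat.mod_lt _ c.npos, htail t⟩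
  exact closure_minimal h2 c.cycU_isClosed h1

open Classical in
/-- Address of a point in the cycle. -/
noncomputable def caddr (y : ℝ) : ℕ :=
  if hy : ∃ k, k < c.n ∧ y ∈ Icc (c.a k) (c.b k) then hy.choose else 0

lemma caddr_spec (hy : y ∈ c.cycU) :
    c.caddr y < c.n ∧ y ∈ Icc (c.a (c.caddr y)) (c.b (c.caddr y)) := by
  rw [c.mem_cycU_iff] at hy
  rw [caddr, dif_pos hy]
  exact hy.choose_spec

lemma caddr_eq {k : ℕ} (hk : k < c.n) (hy : y ∈ Icc (c.a k) (c.b k)) : c.caddr y = k := by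
  have hyU : y ∈ c.cycU := c.mem_cycU_iff.mpr ⟨k, hk, hy⟩
  obtain ⟨h1, h2⟩ := c.caddr_spec hyU
  by_contra hne
  exact (c.hdisj _ h1 _ hk hne).ne_of_mem h2 hy rfl

/-- Minimal gap between distinct intervals. -/
noncomputable def cycGap : ℝ :=
  if hp : (Finset.range c.n).offDiag.Nonempty then
    (Finset.range c.n).offDiag.inf' hp
      (fun p => max (c.a p.2 - c.b p.1) (c.a p.1 - c.b p.2))
  else 1

lemma gap_pair_pos {k l : ℕ} (hk : k < c.n) (hl : l < c.n) (hne : k ≠ l) :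
    0 < max (c.a l - c.b k) (c.a k - c.b l) := by
  by_contra hle
  push_neg at hle
  rw [max_le_iff] at hle
  have h1 : c.a l ≤ c.b k := by linarith [hle.1]
  have h2 : c.a k ≤ c.b l := by linarith [hle.2]
  have hmem1 : max (c.a k) (c.a l) ∈ Icc (c.a k) (c.b k) :=
    ⟨le_max_left _ _, max_le (c.hab k hk).le h1⟩
  have hmem2 : max (c.a k) (c.a l) ∈ Icc (c.a l) (c.b l) :=
    ⟨le_max_right _ _, max_le h2 (c.hab l hl).le⟩
  exact (c.hdisj k hk l hl hne).ne_of_mem hmem1 hmem2 rfl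

lemma cycGap_pos : 0 < c.cycGap := by
  rw [cycGap]
  split_ifs with hp
  · rw [Finset.lt_inf'_iff]
    rintro ⟨k, l⟩ hmem
    rw [Finset.mem_offDiag] at hmem
    obtain ⟨hk, hl, hne⟩ := hmem
    rw [Finset.mem_range] at hk hl
    exact c.gap_pair_pos hk hl hne
  · norm_num

lemma cycGap_same {k l : ℕ} (hk : k < c.n) (hl : l < c.n)
    (hky : y ∈ Icc (c.a k) (c.b k)) (hlz : z ∈ Icc (c.a l) (c.b l))
    (hd : |y - z| < c.cycGap) : k = l := by
  by_contra hne
  have hmem : (k, l) ∈ (Finset.range c.n).offDiag := by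
    rw [Finset.mem_offDiag]
    exact ⟨Finset.mem_range.mpr hk, Finset.mem_range.mpr hl, hne⟩
  have hle : c.cycGap ≤ max (c.a l - c.b k) (c.a k - c.b l) := by
    rw [cycGap, dif_pos ⟨(k,l), hmem⟩]
    exact Finset.inf'_le _ hmem
  have habs := abs_lt.mp hd
  rcases max_cases (c.a l - c.b k) (c.a k - c.b l) with ⟨hmax, -⟩ | ⟨hmax, -⟩ <;>
    rw [hmax] at hle
  · have h1 := hky.2; have h2 := hlz.1; linarith
  · have h1 := hky.1; have h2 := hlz.2; linarith

end CycleData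

section Levels

variable {M : ℝ} {h h' : ℝ → ℝ} {x : ℝ} (cd : ∀ J : ℕ, CycleData M h h' x (J+1))

/-- The recursively chosen level indices. -/
noncomputable def lvlseq : ℕ → ℕ
  | 0 => 1
  | k+1 => (cd (lvlseq k)).n * (k+2).factorial
      * (Nat.ceil (1/(cd (lvlseq k)).cycGap) + 1) - 1

/-- Cycle lengths at each level. -/
noncomputable def NkSeq (k : ℕ) : ℕ := (cd (lvlseq cd k)).n

/-- Digit sizes. -/
noncomputable def alphaSeq : ℕ → ℕ
  | 0 => NkSeq cd 0
  | k+1 => NkSeq cd (k+1) / NkSeq cd k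

lemma NkSeq_pos (k : ℕ) : 0 < NkSeq cd k := (cd (lvlseq cd k)).npos

lemma lvlseq_succ_add_one (k : ℕ) : lvlseq cd (k+1) + 1
    = NkSeq cd k * ((k+2).factorial * (Nat.ceil (1/(cd (lvlseq cd k)).cycGap) + 1)) := by
  have h1 : 0 < NkSeq cd k := NkSeq_pos cd k
  have h2 : 0 < (k+2).factorial := Nat.factorial_pos _
  show (cd (lvlseq cd k)).n * (k+2).factorial * (_ + 1) - 1 + 1 = _
  have h3 : 0 < (cd (lvlseq cd k)).n * (k+2).factorial
      * (Nat.ceil (1/(cd (lvlseq cd k)).cycGap) + 1) := by positivity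
  rw [Nat.sub_add_cancel h3, Nat.mul_assoc]
  rfl

lemma dvd_NkSeq_succ (k : ℕ) :
    NkSeq cd k * ((k+2).factorial * (Nat.ceil (1/(cd (lvlseq cd k)).cycGap) + 1))
      ∣ NkSeq cd (k+1) := by
  rw [← lvlseq_succ_add_one]
  exact (cd (lvlseq cd (k+1))).jdvd

lemma NkSeq_dvd (k : ℕ) : NkSeq cd k ∣ NkSeq cd (k+1) :=
  dvd_trans (Dvd.intro _ rfl) (dvd_NkSeq_succ cd k)

lemma alpha_mul (k : ℕ) : NkSeq cd (k+1) = NkSeq cd k * alphaSeq cd (k+1) :=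
  (Nat.mul_div_cancel' (NkSeq_dvd cd k)).symm

lemma mval_alpha : ∀ k, mval (alphaSeq cd) (k+1) = NkSeq cd k := by
  intro k
  induction k with
  | zero => show mval _ 0 * alphaSeq cd 0 = NkSeq cd 0; simp [mval, alphaSeq]
  | succ k ih =>
    show mval (alphaSeq cd) (k+1) * alphaSeq cd (k+1) = NkSeq cd (k+1)
    rw [ih, ← alpha_mul]

lemma fact_dvd_alpha (k : ℕ) :
    (k+2).factorial * (Nat.ceil (1/(cd (lvlseq cd k)).cycGap) + 1) ∣ alphaSeq cd (k+1) := by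
  have h := dvd_NkSeq_succ cd k
  rw [alpha_mul cd k] at h
  exact (Nat.mul_dvd_mul_iff_left (NkSeq_pos cd k)).mp h

lemma alphaSeq_pos (k : ℕ) : 0 < alphaSeq cd k := by
  cases k with
  | zero => exact NkSeq_pos cd 0
  | succ k =>
    have h := alpha_mul cd k
    have := NkSeq_pos cd (k+1)
    have := NkSeq_pos cd k
    by_contra hc
    push_neg at hc
    interval_cases h' : alphaSeq cd (k+1)
    omega

lemma alpha_two (i : ℕ) : 2 ≤ alphaSeq cd i := by
  cases i with
  | zero =>
    have h : (lvlseq cd 0 + 1) ∣ NkSeq cd 0 := (cd (lvlseq cd 0)).jdvd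
    have h2 : lvlseq cd 0 = 1 := rfl
    rw [h2] at h
    exact Nat.le_of_dvd (NkSeq_pos cd 0) h
  | succ k =>
    have h := fact_dvd_alpha cd k
    have h2 : 2 ≤ (k+2).factorial * (Nat.ceil (1/(cd (lvlseq cd k)).cycGap) + 1) := by
      have hf : 2 ≤ (k+2).factorial := by
        calc 2 = Nat.factorial 2 := rfl
          _ ≤ (k+2).factorial := Nat.factorial_le (by omega)
      calc 2 ≤ (k+2).factorial * 1 := by omega
        _ ≤ _ := Nat.mul_le_mul_left _ (by omega)
    exact le_trans h2 (Nat.le_of_dvd (alphaSeq_pos cd _) h)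

lemma alpha_prime (p : ℕ) (hp : p.Prime) : {i : ℕ | p ∣ alphaSeq cd i}.Infinite := by
  apply Set.Infinite.mono (s := Set.Ici (p+1))
  · intro i hi
    simp only [Set.mem_Ici] at hi
    obtain ⟨k, rfl⟩ : ∃ k, i = k + 1 := ⟨i - 1, by omega⟩
    have h1 : p ∣ (k+2).factorial := Nat.dvd_factorial hp.pos (by omega)
    exact dvd_trans (dvd_trans h1 (Dvd.intro _ rfl)) (fact_dvd_alpha cd k)
  · exact Set.Ici_infinite _

lemma lvlseq_ge (k : ℕ) : k ≤ lvlseq cd k := by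
  induction k with
  | zero => omega
  | succ k ih =>
    have h1 : k + 2 ≤ (k+2).factorial := Nat.self_le_factorial _
    have h2 : 1 ≤ NkSeq cd k := NkSeq_pos cd k
    have : (k+2).factorial ≤ NkSeq cd k * ((k+2).factorial
        * (Nat.ceil (1/(cd (lvlseq cd k)).cycGap) + 1)) := by
      calc (k+2).factorial ≤ (k+2).factorial * (Nat.ceil (1/(cd (lvlseq cd k)).cycGap) + 1) :=
            Nat.le_mul_of_pos_right _ (by omega)
        _ ≤ _ := Nat.le_mul_of_pos_left _ (by omega)
    have h3 := lvlseq_succ_add_one cd k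
    omega

lemma length_lt_gap (k l : ℕ) (hl : l < NkSeq cd (k+1)) :
    (cd (lvlseq cd (k+1))).b l - (cd (lvlseq cd (k+1))).a l < (cd (lvlseq cd k)).cycGap := by
  have h1 := (cd (lvlseq cd (k+1))).hlen l hl
  set g := (cd (lvlseq cd k)).cycGap with hg
  have hgpos : 0 < g := (cd (lvlseq cd k)).cycGap_pos
  set C : ℕ := Nat.ceil (1/g) + 1 with hC
  have hP := lvlseq_succ_add_one cd k
  have hPC : C ≤ lvlseq cd (k+1) + 1 := by
    rw [hP]
    calc C ≤ (k+2).factorial * C := Nat.le_mul_of_pos_left _ (Nat.factorial_pos _)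
      _ ≤ NkSeq cd k * ((k+2).factorial * C) := Nat.le_mul_of_pos_left _ (NkSeq_pos cd k)
  have hCpos : (0:ℝ) < C := by positivity
  have step1 : (1:ℝ) / (lvlseq cd (k+1) + 1) ≤ 1 / C := by
    apply one_div_le_one_div_of_le hCpos
    exact_mod_cast hPC
  have step2 : (1:ℝ) / C < g := by
    rw [div_lt_iff₀ hCpos]
    have : (1:ℝ)/g ≤ Nat.ceil (1/g) := Nat.le_ceil _
    have hCg : (1:ℝ)/g < C := by
      rw [hC]; push_cast; linarith [Nat.le_ceil ((1:ℝ)/g)]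
    calc (1:ℝ) = g * (1/g) := by field_simp
      _ < g * C := by exact mul_lt_mul_of_pos_left hCg hgpos
  calc (cd (lvlseq cd (k+1))).b l - (cd (lvlseq cd (k+1))).a l
      < 1 / (lvlseq cd (k+1) + 1 : ℕ) := h1
    _ ≤ 1 / C := by exact_mod_cast step1
    _ < g := step2

end Levels

lemma nat_shift_id (A S N : ℕ) (hN : 0 < N) : (A + (N - S % N) + S) % N = A % N := by
  have hle : S % N ≤ N := (Nat.mod_lt _ hN).le
  have hdm := Nat.div_add_mod S N
  have key : A + (N - S % N) + S = A + N * (S / N + 1) := by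
    rw [Nat.mul_add, Nat.mul_one]; omega
  rw [key, Nat.add_mul_mod_self_left]

namespace CycleData

variable {M : ℝ} {h h' : ℝ → ℝ} {x y z : ℝ} {J : ℕ} (c : CycleData M h h' x J)

lemma exists_res {k₀ k : ℕ} (hk : k < c.n) (hk₀ : k₀ < c.n) :
    ∃ t₀, ∀ s : ℕ, (k₀ + (t₀ + c.n * s)) % c.n = k := by
  refine ⟨c.n - k₀ % c.n + k, fun s => ?_⟩
  have hmle : k₀ % c.n ≤ c.n := (Nat.mod_lt _ c.npos).le
  have hd : c.n * (k₀ / c.n) + k₀ % c.n = k₀ := Nat.div_add_mod k₀ c.n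
  have hsum : k₀ % c.n + (c.n - k₀ % c.n) = c.n := Nat.add_sub_cancel' hmle
  have key : k₀ + (c.n - k₀ % c.n + k + c.n * s) = k + c.n * (k₀ / c.n + 1 + s) := by
    rw [Nat.mul_add, Nat.mul_add, Nat.mul_one]; omega
  rw [key, Nat.add_mul_mod_self_left, Nat.mod_eq_of_lt hk]

lemma piece_nonempty (hwd : ∀ n : ℕ, newtonSeq h h' x n ∈ Icc (-M) M)
    {k : ℕ} (hk : k < c.n) :
    ∃ y, y ∈ omegaSet h h' x ∧ y ∈ Icc (c.a k) (c.b k) := by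
  obtain ⟨m₀, k₀, hk₀, htail⟩ := c.cycle_tail
  obtain ⟨t₀, ht₀⟩ := c.exists_res hk hk₀
  have humem : ∀ s : ℕ, newtonSeq h h' x (m₀ + (t₀ + c.n * s)) ∈ Icc (c.a k) (c.b k) := by
    intro s
    have := htail (t₀ + c.n * s)
    rwa [ht₀ s] at this
  obtain ⟨w, hwI, ψ, hψ, hconv⟩ := isCompact_Icc.tendsto_subseq humem
  refine ⟨w, ?_, hwI⟩
  apply omegaSet_of_subseq (φ := fun i => m₀ + (t₀ + c.n * ψ i))
  · intro i j hij
    have h1 : ψ i < ψ j := hψ hij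
    have h2 : c.n * ψ i < c.n * ψ j := Nat.mul_lt_mul_of_le_of_lt (le_refl _) h1 c.npos
    show m₀ + (t₀ + c.n * ψ i) < m₀ + (t₀ + c.n * ψ j)
    omega
  · exact hconv

lemma caddr_newton
    (hder : ∀ t ∈ Icc (-M) M, HasDerivWithinAt h (h' t) (Icc (-M) M) t)
    (hcont : ContinuousOn h' (Icc (-M) M))
    (hwd : ∀ n : ℕ, newtonSeq h h' x n ∈ Icc (-M) M)
    (hy : y ∈ omegaSet h h' x) :
    newton h h' y ∈ omegaSet h h' x ∧ c.caddr (newton h h' y) = (c.caddr y + 1) % c.n := by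
  have hyU := c.omegaSet_subset_cycU hy
  obtain ⟨hlt, hmem⟩ := c.caddr_spec hyU
  obtain ⟨hne, hNmem⟩ := c.hmap _ hlt _ hmem
  have hNω := newton_mem_omegaSet hder hcont hwd hy hne
  exact ⟨hNω, c.caddr_eq (Nat.mod_lt _ c.npos) hNmem⟩

end CycleData

/-- If the Newton orbit of (h,x) is well-defined in [-M,M] and for every j ≥ 1 there
are n(j) (divisible by j) pairwise disjoint closed intervals of length < 1/j, cyclically
mapped into one another by N(h,·) and visited by the orbit, then the ω-limit set
ω(h,x) with the restriction of N(h,·) is topologically conjugate to an ∞-adic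
odometer. -/
theorem stmt16 (M : ℝ) (hM : 0 < M) (h h' : ℝ → ℝ)
    (hder : ∀ t ∈ Icc (-M) M, HasDerivWithinAt h (h' t) (Icc (-M) M) t)
    (hcont : ContinuousOn h' (Icc (-M) M))
    (x : ℝ) (hx : x ∈ Icc (-M) M)
    (hwd : ∀ n : ℕ, newtonSeq h h' x n ∈ Icc (-M) M ∧ h' (newtonSeq h h' x n) ≠ 0)
    (hcyc : ∀ j : ℕ, 1 ≤ j → ∃ n : ℕ, 0 < n ∧ j ∣ n ∧ ∃ a b : ℕ → ℝ,
      (∀ k < n, a k < b k ∧ Icc (a k) (b k) ⊆ Icc (-M) M ∧ b k - a k < 1 / j) ∧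
      (∀ k < n, ∀ l < n, k ≠ l → Disjoint (Icc (a k) (b k)) (Icc (a l) (b l))) ∧
      (∀ k < n, ∀ y ∈ Icc (a k) (b k),
        h' y ≠ 0 ∧ newton h h' y ∈ Icc (a ((k + 1) % n)) (b ((k + 1) % n))) ∧
      (∃ m : ℕ, ∃ k < n, newtonSeq h h' x m ∈ Icc (a k) (b k))) :
    ∃ α : ℕ → ℕ, (∀ i, 2 ≤ α i) ∧
      (∀ p : ℕ, p.Prime → {i : ℕ | p ∣ α i}.Infinite) ∧
      ∃ e : (omegaSet h h' x) ≃ₜ (∀ i, Fin (α i)),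
        ∀ y : ℝ, ∀ hy : y ∈ omegaSet h h' x,
          ∃ hy' : newton h h' y ∈ omegaSet h h' x,
            e ⟨newton h h' y, hy'⟩ = phi α (e ⟨y, hy⟩) := by
  classical
  have hwd1 : ∀ n : ℕ, newtonSeq h h' x n ∈ Icc (-M) M := fun n => (hwd n).1
  have hcd : ∀ J : ℕ, Nonempty (CycleData M h h' x (J+1)) := by
    intro J
    obtain ⟨n, hn, hdvd, a, b, h1, h2, h3, h4⟩ := hcyc (J+1) (by omega)
    exact ⟨⟨n, hn, hdvd, a, b, fun k hk => (h1 k hk).1, fun k hk => (h1 k hk).2.1,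
      fun k hk => (h1 k hk).2.2, h2, h3, h4⟩⟩
  let cd : ∀ J : ℕ, CycleData M h h' x (J+1) := fun J => Classical.choice (hcd J)
  refine ⟨alphaSeq cd, alpha_two cd, fun p hp => alpha_prime cd p hp, ?_⟩
  set Ω : Set ℝ := omegaSet h h' x with hΩdef
  set CA : ℕ → ℝ → ℕ := fun k y => (cd (lvlseq cd k)).caddr y with hCAdef
  have hmem : ∀ k : ℕ, ∀ y ∈ Ω, CA k y < NkSeq cd k ∧
      y ∈ Icc ((cd (lvlseq cd k)).a (CA k y)) ((cd (lvlseq cd k)).b (CA k y)) :=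
    fun k y hy => (cd (lvlseq cd k)).caddr_spec ((cd (lvlseq cd k)).omegaSet_subset_cycU hy)
  have hNΩ : ∀ y ∈ Ω, newton h h' y ∈ Ω :=
    fun y hy => ((cd (lvlseq cd 0)).caddr_newton hder hcont hwd1 hy).1
  have hCaN : ∀ k : ℕ, ∀ y ∈ Ω, CA k (newton h h' y) = (CA k y + 1) % NkSeq cd k :=
    fun k y hy => ((cd (lvlseq cd k)).caddr_newton hder hcont hwd1 hy).2
  have hIccDist : ∀ (a b u v : ℝ), u ∈ Icc a b → v ∈ Icc a b → |u - v| ≤ b - a := by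
    intro a b u v hu hv
    rw [abs_le]
    constructor
    · linarith [hu.1, hv.2]
    · linarith [hu.2, hv.1]
  have hRef : ∀ k : ℕ, ∀ y ∈ Ω, ∀ z ∈ Ω, CA (k+1) y = CA (k+1) z → CA k y = CA k z := by
    intro k y hy z hz hca
    obtain ⟨hylt, hyIcc⟩ := hmem (k+1) y hy
    obtain ⟨hzlt, hzIcc⟩ := hmem (k+1) z hz
    rw [hca] at hyIcc
    have hdist := hIccDist _ _ _ _ hyIcc hzIcc
    have hlen := length_lt_gap cd k (CA (k+1) z) hzlt
    obtain ⟨hylt0, hyIcc0⟩ := hmem k y hy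
    obtain ⟨hzlt0, hzIcc0⟩ := hmem k z hz
    exact (cd (lvlseq cd k)).cycGap_same hylt0 hzlt0 hyIcc0 hzIcc0 (lt_of_le_of_lt hdist hlen)
  have hpw : ∀ k l : ℕ, ∃ w, w ∈ Ω ∧
      w ∈ Icc ((cd (lvlseq cd (k+1))).a (l % NkSeq cd (k+1)))
              ((cd (lvlseq cd (k+1))).b (l % NkSeq cd (k+1))) :=
    fun k l => (cd (lvlseq cd (k+1))).piece_nonempty hwd1 (Nat.mod_lt _ (NkSeq_pos cd (k+1)))
  choose W hW1 hW2 using hpw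
  set g : ℕ → ℕ → ℕ := fun k l => CA k (W k l) with hgdef
  have hWaddr : ∀ k l : ℕ, CA (k+1) (W k l) = l % NkSeq cd (k+1) :=
    fun k l => (cd (lvlseq cd (k+1))).caddr_eq (Nat.mod_lt _ (NkSeq_pos cd (k+1))) (hW2 k l)
  have hkey : ∀ k l : ℕ, ∀ y ∈ Ω, CA (k+1) y = l % NkSeq cd (k+1) → CA k y = g k l := by
    intro k l y hy hca
    exact hRef k y hy (W k l) (hW1 k l) (by rw [hca, hWaddr])
  have hglt : ∀ k l, g k l < NkSeq cd k := fun k l => (hmem k _ (hW1 k l)).1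
  have hgcoc : ∀ k l, g k (l+1) = (g k l + 1) % NkSeq cd k := by
    intro k l
    have hw1 := hW1 k l
    have hNw : newton h h' (W k l) ∈ Ω := hNΩ _ hw1
    have h1 : CA (k+1) (newton h h' (W k l)) = (l+1) % NkSeq cd (k+1) := by
      rw [hCaN (k+1) _ hw1, hWaddr, Nat.mod_add_mod]
    have h2 := hkey k (l+1) _ hNw h1
    rw [← h2, hCaN k _ hw1]
  have hglin : ∀ k t, g k t = (g k 0 + t) % NkSeq cd k := by
    intro k t
    induction t with
    | zero => exact (Nat.mod_eq_of_lt (hglt k 0)).symm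
    | succ t ih => rw [hgcoc, ih, Nat.mod_add_mod, Nat.add_assoc]
  have hCag : ∀ k : ℕ, ∀ y ∈ Ω, CA k y = (g k 0 + CA (k+1) y) % NkSeq cd k := by
    intro k y hy
    have h1 := hkey k (CA (k+1) y) y hy (Nat.mod_eq_of_lt (hmem (k+1) y hy).1).symm
    rw [h1, hglin]
  set s : ℕ → ℕ := fun k => Nat.rec (motive := fun _ => ℕ) 0 (fun k acc => acc + g k 0) k
    with hsdef
  have hsS : ∀ k, s (k+1) = s k + g k 0 := fun k => rfl
  set ch : ℕ → ℝ → ℕ := fun k y => (CA k y + s k) % NkSeq cd k with hchdef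
  have hchlt : ∀ (k : ℕ) (y : ℝ), ch k y < NkSeq cd k :=
    fun k y => Nat.mod_lt _ (NkSeq_pos cd k)
  have hchm : ∀ (k : ℕ) (y : ℝ), ch k y < mval (alphaSeq cd) (k+1) := fun k y => by
    rw [mval_alpha]; exact hchlt k y
  have hcompat : ∀ k : ℕ, ∀ y ∈ Ω, ch (k+1) y % NkSeq cd k = ch k y := by
    intro k y hy
    show ((CA (k+1) y + s (k+1)) % NkSeq cd (k+1)) % NkSeq cd k
      = (CA k y + s k) % NkSeq cd k
    rw [Nat.mod_mod_of_dvd _ (NkSeq_dvd cd k), hCag k y hy, Nat.mod_add_mod]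
    have harg : CA (k+1) y + s (k+1) = g k 0 + CA (k+1) y + s k := by
      rw [hsS]; ring
    rw [harg]
  have hsucc : ∀ k : ℕ, ∀ y ∈ Ω, ch k (newton h h' y) = (ch k y + 1) % NkSeq cd k := by
    intro k y hy
    show (CA k (newton h h' y) + s k) % NkSeq cd k
      = ((CA k y + s k) % NkSeq cd k + 1) % NkSeq cd k
    rw [hCaN k y hy, Nat.mod_add_mod, Nat.mod_add_mod]
    have harg : CA k y + 1 + s k = CA k y + s k + 1 := by ring
    rw [harg]
  have hchinj : ∀ k : ℕ, ∀ y ∈ Ω, ∀ z ∈ Ω, ch k y = ch k z → CA k y = CA k z := by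
    intro k y hy z hz he
    have hmeq : CA k y + s k ≡ CA k z + s k [MOD NkSeq cd k] := he
    have h1 : CA k y ≡ CA k z [MOD NkSeq cd k] := hmeq.add_right_cancel' (s k)
    have h2 : CA k y % NkSeq cd k = CA k z % NkSeq cd k := h1
    rwa [Nat.mod_eq_of_lt (hmem k y hy).1, Nat.mod_eq_of_lt (hmem k z hz).1] at h2
  have hCafrom : ∀ k : ℕ, ∀ y ∈ Ω,
      CA k y = (ch k y + (NkSeq cd k - s k % NkSeq cd k)) % NkSeq cd k := by
    intro k y hy
    show CA k y
      = ((CA k y + s k) % NkSeq cd k + (NkSeq cd k - s k % NkSeq cd k)) % NkSeq cd k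
    rw [Nat.mod_add_mod]
    have harg : CA k y + s k + (NkSeq cd k - s k % NkSeq cd k)
        = CA k y + (NkSeq cd k - s k % NkSeq cd k) + s k := by ring
    rw [harg, nat_shift_id _ _ _ (NkSeq_pos cd k), Nat.mod_eq_of_lt (hmem k y hy).1]
  have hαa := alpha_two cd
  let E : ↥Ω → ∀ i, Fin (alphaSeq cd i) := fun y =>
    mkDigits (alphaSeq cd) hαa (fun k => ch k ↑y) (fun k => hchm k ↑y)
  have hEod : ∀ (y : ↥Ω) (k : ℕ), odval (alphaSeq cd) (E y) (k+1) = ch k ↑y :=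
    fun y k => mkDigits_odval hαa _ _
      (fun k => by rw [mval_alpha]; exact hcompat k ↑y y.2) k
  have hEinj : Function.Injective E := by
    intro y z hE
    by_contra hne
    have hyz : (y : ℝ) ≠ (z : ℝ) := fun hc => hne (Subtype.ext hc)
    have habs : 0 < |(y : ℝ) - z| := abs_pos.mpr (sub_ne_zero.mpr hyz)
    obtain ⟨K0, hK0⟩ := exists_nat_gt (1 / |(y : ℝ) - z|)
    set K := K0 + 1 with hKdef
    have hKpos : (0:ℝ) < K := by positivity
    have h1K : 1 / (K:ℝ) < |(y : ℝ) - z| := by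
      have h3 : 1 / |(y : ℝ) - z| < (K : ℝ) := by
        rw [hKdef]; push_cast; linarith
      rw [div_lt_iff₀ habs] at h3
      rw [div_lt_iff₀ hKpos]
      linarith
    have hch : ch K ↑y = ch K ↑z := by
      have h4 := congrArg (fun d => odval (alphaSeq cd) d (K+1)) hE
      rwa [hEod y K, hEod z K] at h4
    have hCA := hchinj K ↑y y.2 ↑z z.2 hch
    obtain ⟨hylt, hyIcc⟩ := hmem K ↑y y.2
    obtain ⟨hzlt, hzIcc⟩ := hmem K ↑z z.2
    rw [hCA] at hyIcc
    have hdist := hIccDist _ _ _ _ hyIcc hzIcc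
    have hlen := (cd (lvlseq cd K)).hlen _ hzlt
    have hKle : (K : ℝ) ≤ ((lvlseq cd K + 1 : ℕ) : ℝ) := by
      have := lvlseq_ge cd K
      exact_mod_cast by omega
    have hfin : (1:ℝ) / ((lvlseq cd K + 1 : ℕ) : ℝ) ≤ 1 / (K:ℝ) :=
      one_div_le_one_div_of_le hKpos hKle
    linarith
  have hEsurj : Function.Surjective E := by
    intro d
    set c : ℕ → ℕ := fun k => odval (alphaSeq cd) d (k+1) with hcdef
    have hclt : ∀ k, c k < NkSeq cd k := fun k => by
      have := odval_lt hαa d (k+1)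
      rwa [mval_alpha] at this
    have hcmod : ∀ k, c (k+1) % NkSeq cd k = c k := by
      intro k
      show odval (alphaSeq cd) d (k+2) % NkSeq cd k = odval (alphaSeq cd) d (k+1)
      have hstep : odval (alphaSeq cd) d (k+2)
          = odval (alphaSeq cd) d (k+1) + (d (k+1)).val * NkSeq cd k := by
        show odval (alphaSeq cd) d (k+1) + (d (k+1)).val * mval (alphaSeq cd) (k+1) = _
        rw [mval_alpha]
      rw [hstep, Nat.add_mul_mod_self_right, Nat.mod_eq_of_lt (hclt k)]
    set T : ℕ → ℕ := fun k => (c k + (NkSeq cd k - s k % NkSeq cd k)) % NkSeq cd k with hTdef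
    have hTlt : ∀ k, T k < NkSeq cd k := fun k => Nat.mod_lt _ (NkSeq_pos cd k)
    set P : ℕ → Set ℝ := fun k =>
      Ω ∩ Icc ((cd (lvlseq cd k)).a (T k)) ((cd (lvlseq cd k)).b (T k)) with hPdef
    have hPaddr : ∀ k, ∀ y ∈ P k, CA k y = T k ∧ ch k y = c k := by
      intro k y hy
      obtain ⟨hyΩ, hyI⟩ := hy
      have hca : CA k y = T k := (cd (lvlseq cd k)).caddr_eq (hTlt k) hyI
      refine ⟨hca, ?_⟩
      show (CA k y + s k) % NkSeq cd k = c k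
      rw [hca]
      show ((c k + (NkSeq cd k - s k % NkSeq cd k)) % NkSeq cd k + s k) % NkSeq cd k = c k
      rw [Nat.mod_add_mod, nat_shift_id _ _ _ (NkSeq_pos cd k), Nat.mod_eq_of_lt (hclt k)]
    have hPsub : ∀ k, P (k+1) ⊆ P k := by
      intro k y hy
      have hyΩ : y ∈ Ω := hy.1
      have hch1 : ch (k+1) y = c (k+1) := (hPaddr (k+1) y hy).2
      have hch0 : ch k y = c k := by
        rw [← hcompat k y hyΩ, hch1, hcmod k]
      have hca0 : CA k y = T k := by
        rw [hCafrom k y hyΩ, hch0]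
      refine ⟨hyΩ, ?_⟩
      have hmm := (hmem k y hyΩ).2
      rwa [hca0] at hmm
    have hPne : ∀ k, (P k).Nonempty := by
      intro k
      obtain ⟨w, hw1, hw2⟩ := (cd (lvlseq cd k)).piece_nonempty hwd1 (hTlt k)
      exact ⟨w, hw1, hw2⟩
    have hPcl : ∀ k, IsClosed (P k) := fun k => omegaSet_isClosed.inter isClosed_Icc
    have hPcp : IsCompact (P 0) :=
      (omegaSet_isCompact hwd1).of_isClosed_subset (hPcl 0) inter_subset_left
    obtain ⟨y, hy⟩ :=
      IsCompact.nonempty_iInter_of_sequence_nonempty_isCompact_isClosed P hPsub hPne hPcp hPcl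
    have hyP : ∀ k, y ∈ P k := Set.mem_iInter.mp hy
    have hyΩ : y ∈ Ω := (hyP 0).1
    refine ⟨⟨y, hyΩ⟩, ?_⟩
    apply odval_eq_digits hαa
    intro k
    rw [hEod ⟨y, hyΩ⟩ k]
    exact (hPaddr k y (hyP k)).2
  have hLC : ∀ k : ℕ, IsLocallyConstant (fun y : ↥Ω => CA k ↑y) := by
    intro k
    rw [IsLocallyConstant.iff_isOpen_fiber]
    intro l
    have hcl : IsClosed {y : ↥Ω | CA k ↑y ≠ l} := by
      have hset : {y : ↥Ω | CA k ↑y ≠ l} = Subtype.val ⁻¹'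
          (⋃ l' ∈ (Finset.range (NkSeq cd k)).erase l,
            Icc ((cd (lvlseq cd k)).a l') ((cd (lvlseq cd k)).b l')) := by
        ext y
        simp only [Set.mem_setOf_eq, Set.mem_preimage, Set.mem_iUnion, Finset.mem_erase,
          Finset.mem_range, exists_prop]
        constructor
        · intro hne
          exact ⟨CA k ↑y, ⟨hne, (hmem k ↑y y.2).1⟩, (hmem k ↑y y.2).2⟩
        · rintro ⟨l', ⟨hne, hlt⟩, hmem'⟩
          have hca : CA k ↑y = l' := (cd (lvlseq cd k)).caddr_eq hlt hmem'
          rw [hca]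
          exact hne
      rw [hset]
      apply IsClosed.preimage continuous_subtype_val
      exact Set.Finite.isClosed_biUnion (Finset.finite_toSet _) (fun _ _ => isClosed_Icc)
    have hcompl : (fun y : ↥Ω => CA k ↑y) ⁻¹' {l} = {y : ↥Ω | CA k ↑y ≠ l}ᶜ := by
      ext y; simp
    rw [hcompl]
    exact hcl.isOpen_compl
  have hEcont : Continuous E := by
    apply continuous_pi
    intro i
    cases i with
    | zero =>
      have heq : (fun y : ↥Ω => E y 0) =
          (fun v : ℕ => (⟨(v + s 0) % NkSeq cd 0, by
              show (v + s 0) % NkSeq cd 0 < alphaSeq cd 0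
              exact Nat.mod_lt _ (NkSeq_pos cd 0)⟩ : Fin (alphaSeq cd 0)))
            ∘ (fun y : ↥Ω => CA 0 ↑y) := by
        funext y
        apply Fin.ext
        rfl
      rw [heq]
      exact ((hLC 0).comp _).continuous
    | succ i =>
      have heq : (fun y : ↥Ω => E y (i+1)) =
          (fun v : ℕ => (⟨((v + s (i+1)) % NkSeq cd (i+1)) / mval (alphaSeq cd) (i+1), by
              apply Nat.div_lt_of_lt_mul
              rw [mval_alpha, ← alpha_mul]
              exact Nat.mod_lt _ (NkSeq_pos cd (i+1))⟩ : Fin (alphaSeq cd (i+1))))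
            ∘ (fun y : ↥Ω => CA (i+1) ↑y) := by
        funext y
        apply Fin.ext
        rfl
      rw [heq]
      exact ((hLC (i+1)).comp _).continuous
  haveI : CompactSpace ↥Ω := isCompact_iff_compactSpace.mp (omegaSet_isCompact hwd1)
  let Eequiv : ↥Ω ≃ (∀ i, Fin (alphaSeq cd i)) := Equiv.ofBijective E ⟨hEinj, hEsurj⟩
  have hEc : Continuous ⇑Eequiv := hEcont
  refine ⟨hEc.homeoOfEquivCompactToT2, ?_⟩
  intro y hy
  refine ⟨hNΩ y hy, ?_⟩
  show E ⟨newton h h' y, hNΩ y hy⟩ = phi (alphaSeq cd) (E ⟨y, hy⟩)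
  apply odval_eq_digits hαa
  intro k
  have h1 := hEod ⟨newton h h' y, hNΩ y hy⟩ k
  have h2 := hEod ⟨y, hy⟩ k
  have h3 := odval_phi hαa (E ⟨y, hy⟩) (k+1)
  rw [h1, h3, h2, mval_alpha]
  exact hsucc k y hy
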